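/- There exists a family of directed graphs G_n on Θ(n) vertices with two distinguished vertices s and t such that s and t are connected by a balanced walk, but every balanced walk from s to t has length Θ(n²); in particular the shortest balanced walk is not simple. -/

import Mathlib

variable {V : Type*}

open Classical in
/-- The balance (number of forward edges minus number of backward edges) of a walk,
given as its list of vertices, in the underlying undirected graph of the digraph `E`. -/
noncomputable def bal (E : V → V → Prop) : List V → ℤ
  | u :: v :: r =>
      (if E u v ∧ ¬ E v u then 1 else if E v u ∧ ¬ E u v then -1 else 0) + bal E (v :: r)
  | _ => 0

/-- `p` is a walk from `s` to `t` in the underlying undirected graph of the digraph `E`. -/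
def IsWalk (E : V → V → Prop) (s t : V) (p : List V) : Prop :=
  p.head? = some s ∧ p.getLast? = some t ∧ p.Chain' (fun u v => E u v ∨ E v u)

/-!
The graph is a lollipop: a directed path `s = v₀ → v₁ → ⋯ → vₙ = t` whose first vertex lies on
a cycle of `n + 1` bidirectional edges, except for one edge into `s` that is directed. Going once
around the cycle against that edge has balance `-1` and the path has balance `n`, so `n` rounds
followed by the path form a balanced walk with `(n + 1)²` vertices. Conversely, the potential
`Φ(vᵢ) = n i` on the path and `Φ = j - n` on the `j`-th cycle vertex changes along every edge by
`n` times the sign of the edge, up to an error of at most one. A balanced walk from `s` to `t`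
therefore has at least `Φ t - Φ s = n²` edges, more than the `2 n + 1` vertices of the graph.
-/

theorem List.head?_ofFn_succ {α : Type*} {k : ℕ} (f : Fin (k + 1) → α) :
    (List.ofFn f).head? = some (f 0) := by
  rw [List.ofFn_succ, List.head?_cons]

theorem List.getLast?_ofFn_succ {α : Type*} {k : ℕ} (f : Fin (k + 1) → α) :
    (List.ofFn f).getLast? = some (f (Fin.last k)) := by
  rw [List.ofFn_succ', List.concat_eq_append, List.getLast?_concat]

section Balance

variable (E : V → V → Prop)

open Classical in
noncomputable def edgeSign (u v : V) : ℤ :=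
  if E u v ∧ ¬ E v u then 1 else if E v u ∧ ¬ E u v then -1 else 0

theorem bal_cons_cons (u v : V) (r : List V) :
    bal E (u :: v :: r) = edgeSign E u v + bal E (v :: r) := rfl

variable {E}

theorem edgeSign_of_forward {u v : V} (huv : E u v) (hvu : ¬ E v u) : edgeSign E u v = 1 := by
  simp [edgeSign, huv, hvu]

theorem edgeSign_of_backward {u v : V} (huv : ¬ E u v) (hvu : E v u) : edgeSign E u v = -1 := by
  simp [edgeSign, huv, hvu]

theorem edgeSign_of_symm {u v : V} (huv : E u v) (hvu : E v u) : edgeSign E u v = 0 := by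
  simp [edgeSign, huv, hvu]

theorem bal_append_cons (p : List V) (x : V) (q : List V) :
    bal E (p ++ x :: q) = bal E (p ++ [x]) + bal E (x :: q) := by
  induction p with
  | nil => simp [bal]
  | cons a p ih =>
    cases p with
    | nil => simp [bal_cons_cons, bal]
    | cons b p => simp only [List.cons_append, bal_cons_cons] at ih ⊢; rw [ih]; ring

theorem bal_eq_zero_of_isChain_symm :
    ∀ {p : List V}, p.IsChain (fun u v => E u v ∧ E v u) → bal E p = 0
  | [], _ | [_], _ => rfl
  | _ :: _ :: _, h => by
    rw [List.isChain_cons_cons] at h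
    rw [bal_cons_cons, edgeSign_of_symm h.1.1 h.1.2, bal_eq_zero_of_isChain_symm h.2, add_zero]

theorem bal_cons_eq_length_of_isChain_forward :
    ∀ {x : V} {p : List V}, (x :: p).IsChain (fun u v => E u v ∧ ¬ E v u) →
      bal E (x :: p) = p.length
  | _, [], _ => rfl
  | _, _ :: _, h => by
    rw [List.isChain_cons_cons] at h
    rw [bal_cons_cons, edgeSign_of_forward h.1.1 h.1.2, bal_cons_eq_length_of_isChain_forward h.2]
    simp [add_comm]

theorem IsWalk.append {a b c : V} {p q : List V} (hp : IsWalk E a b (p ++ [b]))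
    (hq : IsWalk E b c (b :: q)) : IsWalk E a c (p ++ b :: q) := by
  obtain ⟨hpa, -, hpc⟩ := hp
  obtain ⟨-, hqc, hqc'⟩ := hq
  refine ⟨?_, ?_, List.isChain_split.2 ⟨hpc, hqc'⟩⟩
  · cases p <;> simpa using hpa
  · simpa using hqc

theorem isWalk_flatten_replicate {x : V} {r : List V} (hc : IsWalk E x x (x :: r ++ [x]))
    (m : ℕ) : IsWalk E x x ((List.replicate m (x :: r)).flatten ++ [x]) := by
  induction m with
  | zero => exact ⟨rfl, rfl, List.isChain_singleton _⟩
  | succ m ih =>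
    rw [List.replicate_succ', List.flatten_append, List.flatten_singleton, List.append_assoc,
      List.cons_append]
    exact ih.append hc

theorem bal_flatten_replicate (x : V) (r : List V) (m : ℕ) :
    bal E ((List.replicate m (x :: r)).flatten ++ [x]) = m * bal E (x :: r ++ [x]) := by
  induction m with
  | zero => simp [bal]
  | succ m ih =>
    rw [List.replicate_succ', List.flatten_append, List.flatten_singleton, List.append_assoc,
      List.cons_append, bal_append_cons, ih, List.cons_append]
    push_cast; ring

variable (E) in
def IsBalancePotential (m : ℤ) (Φ : V → ℤ) : Prop :=
  ∀ u v, E u v ∨ E v u → |m * edgeSign E u v - (Φ v - Φ u)| ≤ 1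

theorem IsWalk.abs_mul_bal_sub_le {Φ : V → ℤ} {m : ℤ} (hΦ : IsBalancePotential E m Φ) :
    ∀ {a b : V} {p : List V}, IsWalk E a b p → |m * bal E p - (Φ b - Φ a)| ≤ p.length - 1
  | _, _, [], h => by simp [IsWalk] at h
  | a, b, [x], ⟨ha, hb, _⟩ => by simp_all [bal]
  | a, b, x :: y :: r, ⟨ha, hb, hc⟩ => by
    obtain rfl : x = a := by simpa using ha
    rw [List.Chain', List.isChain_cons_cons] at hc
    have hrest := IsWalk.abs_mul_bal_sub_le hΦ (a := y) (b := b) ⟨rfl, by simpa using hb, hc.2⟩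
    have hstep := hΦ x y hc.1
    rw [bal_cons_cons]
    calc |m * (edgeSign E x y + bal E (y :: r)) - (Φ b - Φ x)|
        = |(m * edgeSign E x y - (Φ y - Φ x)) + (m * bal E (y :: r) - (Φ b - Φ y))| := by ring_nf
      _ ≤ 1 + ((y :: r).length - 1) := (abs_add_le _ _).trans (add_le_add hstep hrest)
      _ = (x :: y :: r).length - 1 := by simp only [List.length_cons]; push_cast; ring

theorem IsWalk.abs_sub_lt_length_of_bal_eq_zero {Φ : V → ℤ} {m : ℤ}
    (hΦ : IsBalancePotential E m Φ) {a b : V} {p : List V} (hp : IsWalk E a b p)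
    (h0 : bal E p = 0) : |Φ b - Φ a| < p.length := by
  have := hp.abs_mul_bal_sub_le hΦ
  rw [h0, mul_zero, zero_sub, abs_neg] at this
  omega

end Balance

/-- The path `s = inl 0 → inl 1 → ⋯ → inl n = t`, and the cycle `inl 0, inr 0, …, inr (n-1)`,
which is bidirectional except for the directed edge `inr 0 → inl 0`. -/
def lollipop (n : ℕ) : Fin (n + 1) ⊕ Fin n → Fin (n + 1) ⊕ Fin n → Prop
  | .inl i, .inl j => j.val = i.val + 1
  | .inl i, .inr j => i.val = 0 ∧ j.val + 1 = n
  | .inr j, .inl i => i.val = 0 ∧ (j.val = 0 ∨ j.val + 1 = n)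
  | .inr j, .inr k => j.val + 1 = k.val ∨ k.val + 1 = j.val

def lollipopPotential (n : ℕ) : Fin (n + 1) ⊕ Fin n → ℤ
  | .inl i => n * i.val
  | .inr j => j.val - n

theorem isBalancePotential_lollipopPotential (n : ℕ) :
    IsBalancePotential (lollipop n) n (lollipopPotential n) := by
  intro u v h
  rcases u with i | j <;> rcases v with i' | j' <;> simp only [lollipop] at h
  · rcases h with h | h <;> simp [edgeSign, lollipop, lollipopPotential, h] <;> ring_nf <;> simp
  · have hi : i.val = 0 := by tauto
    unfold edgeSign
    split_ifs <;>
      simp only [lollipop, lollipopPotential, hi, Nat.cast_zero, mul_zero, true_and] at * <;>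
      rw [abs_le] <;> omega
  · have hi : i'.val = 0 := by tauto
    unfold edgeSign
    split_ifs <;>
      simp only [lollipop, lollipopPotential, hi, Nat.cast_zero, mul_zero, true_and] at * <;>
      rw [abs_le] <;> omega
  · unfold edgeSign
    split_ifs <;> simp only [lollipop, lollipopPotential] at * <;> rw [abs_le] <;> omega

def lollipopCycle (n : ℕ) : List (Fin (n + 1) ⊕ Fin n) := List.ofFn Sum.inr

def lollipopStick (n : ℕ) : List (Fin (n + 1) ⊕ Fin n) := List.ofFn Sum.inl

theorem isChain_lollipopCycle_append {n : ℕ} (hn : 1 ≤ n) :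
    (lollipopCycle n ++ [Sum.inl 0]).IsChain (fun u v => lollipop n u v ∧ lollipop n v u) := by
  obtain ⟨k, rfl⟩ := Nat.exists_eq_add_of_le' hn
  rw [lollipopCycle]
  refine (List.isChain_ofFn.2 fun j hj => ?_).append (List.isChain_singleton _) ?_
  · simp [lollipop]
  · rw [List.getLast?_ofFn_succ]
    simp [lollipop]

theorem isWalk_lollipop_loop {n : ℕ} (hn : 1 ≤ n) :
    IsWalk (lollipop n) (Sum.inl 0) (Sum.inl 0) (Sum.inl 0 :: lollipopCycle n ++ [Sum.inl 0]) := by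
  have hcycle : (lollipopCycle n ++ [Sum.inl 0]).IsChain
      (fun u v => lollipop n u v ∨ lollipop n v u) :=
    (isChain_lollipopCycle_append hn).imp fun _ _ h => Or.inl h.1
  obtain ⟨k, rfl⟩ := Nat.exists_eq_add_of_le' hn
  rw [List.cons_append]
  refine ⟨rfl, by rw [← List.cons_append, List.getLast?_concat],
    List.isChain_cons.2 ⟨?_, hcycle⟩⟩
  simp [lollipopCycle, List.ofFn_succ, lollipop]

theorem bal_lollipop_loop {n : ℕ} (hn : 2 ≤ n) :
    bal (lollipop n) (Sum.inl 0 :: lollipopCycle n ++ [Sum.inl 0]) = -1 := by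
  have hcycle := bal_eq_zero_of_isChain_symm (isChain_lollipopCycle_append (one_le_two.trans hn))
  obtain ⟨k, rfl⟩ := Nat.exists_eq_add_of_le' (one_le_two.trans hn)
  rw [lollipopCycle, List.ofFn_succ, List.cons_append] at hcycle ⊢
  rw [List.cons_append, bal_cons_cons, hcycle,
    edgeSign_of_backward (by simp only [lollipop, Fin.coe_ofNat_eq_mod, Nat.zero_mod]; omega)
      (by simp [lollipop]), add_zero]

theorem isChain_lollipopStick (n : ℕ) :
    (lollipopStick n).IsChain (fun u v => lollipop n u v ∧ ¬ lollipop n v u) := by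
  refine List.isChain_ofFn.2 fun i hi => ?_
  simp only [lollipop, true_and]
  omega

theorem isWalk_lollipopStick (n : ℕ) :
    IsWalk (lollipop n) (Sum.inl 0) (Sum.inl (Fin.last n)) (lollipopStick n) :=
  ⟨List.head?_ofFn_succ _, List.getLast?_ofFn_succ _,
    (isChain_lollipopStick n).imp fun _ _ h => Or.inl h.1⟩

theorem bal_lollipopStick (n : ℕ) : bal (lollipop n) (lollipopStick n) = n := by
  have h := isChain_lollipopStick n
  rw [lollipopStick, List.ofFn_succ] at h ⊢
  rw [bal_cons_eq_length_of_isChain_forward h, List.length_ofFn]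

def lollipopBalancedWalk (n : ℕ) : List (Fin (n + 1) ⊕ Fin n) :=
  (List.replicate n (Sum.inl 0 :: lollipopCycle n)).flatten ++ lollipopStick n

theorem isWalk_lollipopBalancedWalk {n : ℕ} (hn : 1 ≤ n) :
    IsWalk (lollipop n) (Sum.inl 0) (Sum.inl (Fin.last n)) (lollipopBalancedWalk n) := by
  have hstick := isWalk_lollipopStick n
  rw [lollipopStick, List.ofFn_succ] at hstick
  rw [lollipopBalancedWalk, lollipopStick, List.ofFn_succ]
  exact (isWalk_flatten_replicate (isWalk_lollipop_loop hn) n).append hstick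

theorem bal_lollipopBalancedWalk {n : ℕ} (hn : 2 ≤ n) :
    bal (lollipop n) (lollipopBalancedWalk n) = 0 := by
  have hstick := bal_lollipopStick n
  rw [lollipopStick, List.ofFn_succ] at hstick
  rw [lollipopBalancedWalk, lollipopStick, List.ofFn_succ, bal_append_cons, hstick,
    bal_flatten_replicate, bal_lollipop_loop hn]
  ring

theorem length_lollipopBalancedWalk (n : ℕ) :
    (lollipopBalancedWalk n).length = (n + 1) ^ 2 := by
  simp only [lollipopBalancedWalk, lollipopCycle, lollipopStick, List.length_append,
    List.length_flatten, List.map_replicate, List.length_cons, List.length_ofFn,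
    List.sum_replicate, smul_eq_mul]
  ring

/-- A family of digraphs on Θ(n) vertices in which `s` and `t` are joined by a balanced
walk, but every balanced walk from `s` to `t` has length Θ(n²) (and is thus not simple). -/
theorem exists_family_balanced_walk_quadratic :
    ∃ (W : ℕ → Type) (_ : ∀ n, Fintype (W n)) (E : ∀ n, W n → W n → Prop)
      (s t : ∀ n, W n) (c N : ℕ), 0 < c ∧
      ∀ n : ℕ, N ≤ n →
        (Fintype.card (W n) ≤ c * n ∧ n ≤ c * Fintype.card (W n)) ∧
        (∃ p : List (W n), IsWalk (E n) (s n) (t n) p ∧ bal (E n) p = 0 ∧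
          p.length ≤ c * n ^ 2) ∧
        (∀ p : List (W n), IsWalk (E n) (s n) (t n) p → bal (E n) p = 0 →
          n ^ 2 ≤ c * p.length ∧ ¬ p.Nodup) := by
  refine ⟨fun n => Fin (n + 1) ⊕ Fin n, fun n => inferInstance, lollipop, fun n => Sum.inl 0,
    fun n => Sum.inl (Fin.last n), 4, 3, by norm_num, fun n hn => ?_⟩
  have hcard : Fintype.card (Fin (n + 1) ⊕ Fin n) = 2 * n + 1 := by
    simp only [Fintype.card_sum, Fintype.card_fin]; ring
  refine ⟨by simp only [hcard]; omega,
    ⟨lollipopBalancedWalk n, isWalk_lollipopBalancedWalk (by omega),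
      bal_lollipopBalancedWalk (by omega), by rw [length_lollipopBalancedWalk]; nlinarith⟩,
    fun p hp hbal => ?_⟩
  have hlong : n ^ 2 < p.length := by
    have := hp.abs_sub_lt_length_of_bal_eq_zero (isBalancePotential_lollipopPotential n) hbal
    simp only [lollipopPotential, Fin.val_last, Fin.coe_ofNat_eq_mod, Nat.zero_mod,
      CharP.cast_eq_zero, mul_zero, sub_zero, abs_mul, Nat.abs_cast] at this
    rw [sq]
    exact_mod_cast this
  refine ⟨by omega, fun hnd => ?_⟩
  have hshort := hnd.length_le_card
  rw [hcard] at hshort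
  nlinarith
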